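/- arXiv:1906.05919 — 3 statements merged into one kernel-verified Lean document; each statement's English description precedes it below -/
import Mathlib

section
/- Let V be a finite type and E an acyclic edge relation on V (TransGen E is irreflexive). Then in the root-augmented graph on Option V, the new root none reaches every vertex: for every v ∈ V, ReflTransGen E' none (some v). (The added root is a most-privileged node that can derive the key of every node in the hierarchy.) -/
/-- The root-augmented graph on `Option V`: edges among original vertices are
preserved, the new root `none` has an edge to exactly the sources of `E`
(vertices with no predecessor), and there are no edges into `none`. -/
def rootAug {V : Type*} (E : V → V → Prop) : Option V → Option V → Prop
  | some u, some v => E u v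
  | none, some v => ∀ w, ¬ E w v
  | _, none => False

/-- In the root-augmented graph of a finite acyclic graph, the new root
`none` reaches every vertex: the added root is a most-privileged node that
can derive the key of every node in the hierarchy. -/
theorem rootAug_root_reaches_all {V : Type*} [Fintype V] (E : V → V → Prop)
    (hE : Irreflexive (Relation.TransGen E)) :
    ∀ v : V, Relation.ReflTransGen (rootAug E) none (some v) := by
  have : IsIrrefl V (Relation.TransGen E) := ⟨hE⟩
  have hwf : WellFounded (Relation.TransGen E) :=
    Finite.wellFounded_of_trans_of_irrefl _
  intro v
  induction v using hwf.induction with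
  | _ v ih =>
    by_cases hs : ∀ w, ¬ E w v
    · exact Relation.ReflTransGen.single hs
    · push_neg at hs
      obtain ⟨w, hw⟩ := hs
      exact (ih w (Relation.TransGen.single hw)).tail hw
end

section
/- Let E be an edge relation on a type V, let r, j ∈ V with j ≠ r, suppose r is a source of E (no w satisfies E w r), and let E' be the relation E augmented with the single edge (r, j), i.e. E' u v ↔ (E u v ∨ (u = r ∧ v = j)). Then for every u ≠ r and every v, ReflTransGen E' u v holds if and only if ReflTransGen E u v holds. (Connecting a disconnected node j to the root via the edge (r, j) does not allow any node other than the root to derive secrets of new descendants.) -/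
/-! A path that starts away from a source `r` of `E` can never enter `r`, so it never uses an
edge leaving `r`; adding such edges therefore changes nothing outside `r`. -/

namespace Relation

variable {V : Type*} {E F : V → V → Prop} {r u v : V}

theorem reflTransGen_and_ne_of_reflTransGen_or_of_source (hr : ∀ w, ¬ E w r)
    (hF : ∀ a b, F a b → a = r) (hu : u ≠ r)
    (h : ReflTransGen (fun a b => E a b ∨ F a b) u v) : ReflTransGen E u v ∧ v ≠ r := by
  induction h with
  | refl => exact ⟨ReflTransGen.refl, hu⟩
  | tail _ hbc ih =>
    rcases hbc with hE | hF'
    · exact ⟨ih.1.tail hE, fun hc => hr _ (hc ▸ hE)⟩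
    · exact absurd (hF _ _ hF') ih.2

theorem reflTransGen_or_iff_of_source (hr : ∀ w, ¬ E w r) (hF : ∀ a b, F a b → a = r)
    (hu : u ≠ r) : ReflTransGen (fun a b => E a b ∨ F a b) u v ↔ ReflTransGen E u v :=
  ⟨fun h => (reflTransGen_and_ne_of_reflTransGen_or_of_source hr hF hu h).1,
    ReflTransGen.mono (fun _ _ => Or.inl) _ _⟩

end Relation

theorem addEdge_from_root_reachability_general {V : Type*} (E : V → V → Prop)
    (r j : V) (hr : ∀ w, ¬ E w r) :
    ∀ u : V, u ≠ r → ∀ v : V,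
      (Relation.ReflTransGen (fun a b => E a b ∨ (a = r ∧ b = j)) u v ↔
        Relation.ReflTransGen E u v) :=
  fun _ hu _ => Relation.reflTransGen_or_iff_of_source hr (fun _ _ h => h.1) hu

/-- Connecting a node `j` to a source root `r` via the single new edge
`(r, j)` does not change reachability from any vertex other than `r`:
no node other than the root can derive secrets of new descendants. -/
theorem addEdge_from_root_reachability {V : Type*} (E : V → V → Prop)
    (r j : V) (hjr : j ≠ r) (hr : ∀ w, ¬ E w r) :
    ∀ u : V, u ≠ r → ∀ v : V,
      (Relation.ReflTransGen (fun a b => E a b ∨ (a = r ∧ b = j)) u v ↔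
        Relation.ReflTransGen E u v) :=
  addEdge_from_root_reachability_general E r j hr
end

section
/- Let K, L, C, SK, PK, M, S, R be types. Let Enc : K → (K × K) → C and Dec : K → C → K × K satisfy Dec k (Enc k m) = m for all k, m; let F : K → L → K; let Keygen : K → SK × PK, Sign : SK → M → R → S, Vrfy : PK → M → S → Bool satisfy signature correctness: for every k, m, r, if (sk, pk) = Keygen k then Vrfy pk m (Sign sk m r) = true. Fix a derivation chain t, x : Fin (n+1) → K, l : Fin (n+1) → L, y : Fin n → C with y i = Enc (F (t i.castSucc) (l i.succ)) (t i.succ, x i.succ), and let d : Fin (n+1) → K be the derivation sequence d 0 = t 0, d (i+1) = (Dec (F (d i.castSucc) (l i.succ)) (y i)).1. Let (msk, mpk) = Keygen k₀ be the master signing key pair for some k₀ ∈ K. Then for every i : Fin n and every message m ∈ M and randomness r, r' ∈ R, letting x̂ = (Dec (F (d i.castSucc) (l i.succ)) (y i)).2 be the key obtained by derivation, (s̄k, p̄k) = Keygen x̂, cert = Sign msk (p̄k, l i.succ) r (a signature on the pair of the signing public key and the node label), and σ = Sign s̄k m r', both verifications succeed: Vrfy mpk (p̄k, l i.succ) cert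 = true and Vrfy p̄k m σ = true. (Correctness of Arcula: a transaction signed with a key derived by any ancestor, together with its certificate, passes Arcula's composite verification against the identity-based public key (mpk, l).) -/
/-- Correctness of Arcula: a transaction signed with a key derived by any
ancestor along the DHKA chain, together with its certificate (a signature
under the master secret key on the encoded pair of the derived signing public
key and the node's label), passes Arcula's composite verification against the
identity-based public key `(mpk, l)`: the certificate verifies under `mpk`
and the transaction signature verifies under the derived signing public key. -/
theorem arcula_correct {K L C SK PK M S R : Type*}
    (Enc : K → K × K → C) (Dec : K → C → K × K)
    (hdec : ∀ (k : K) (m : K × K), Dec k (Enc k m) = m)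
    (F : K → L → K)
    (Keygen : K → SK × PK) (Sign : SK → M → R → S)
    (Vrfy : PK → M → S → Bool)
    (hsig : ∀ (k : K) (m : M) (r : R),
      Vrfy (Keygen k).2 m (Sign (Keygen k).1 m r) = true)
    (encode : PK × L → M)
    (n : ℕ) (t x : Fin (n + 1) → K) (l : Fin (n + 1) → L) (y : Fin n → C)
    (hy : ∀ i : Fin n,
      y i = Enc (F (t i.castSucc) (l i.succ)) (t i.succ, x i.succ))
    (d : Fin (n + 1) → K) (hd0 : d 0 = t 0)
    (hds : ∀ i : Fin n,
      d i.succ = (Dec (F (d i.castSucc) (l i.succ)) (y i)).1)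
    (k₀ : K) (msk : SK) (mpk : PK) (hmk : (msk, mpk) = Keygen k₀) :
    ∀ (i : Fin n) (m : M) (r r' : R),
      -- the key obtained by derivation
      let xhat : K := (Dec (F (d i.castSucc) (l i.succ)) (y i)).2
      let skbar : SK := (Keygen xhat).1
      let pkbar : PK := (Keygen xhat).2
      -- the certificate on the pair of the signing public key and the label
      let cert : S := Sign msk (encode (pkbar, l i.succ)) r
      -- the transaction signature
      let σ : S := Sign skbar m r'
      Vrfy mpk (encode (pkbar, l i.succ)) cert = true ∧ Vrfy pkbar m σ = true := by
  have hdt : ∀ j : Fin (n + 1), d j = t j := by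
    intro j
    induction j using Fin.induction with
    | zero => exact hd0
    | succ i ih =>
      rw [hds i, ih, hy i, hdec]
  intro i m r r'
  have hdec' : Dec (F (d i.castSucc) (l i.succ)) (y i) = (t i.succ, x i.succ) := by
    rw [hdt, hy i, hdec]
  refine ⟨?_, ?_⟩
  · have := hsig k₀ (encode ((Keygen (Dec (F (d i.castSucc) (l i.succ)) (y i)).2).2, l i.succ)) r
    rw [← hmk] at this
    exact this
  · exact hsig _ m r'
end
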